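/- arXiv:2204.07462 — 9 statements merged into one kernel-verified Lean document; each statement's English description precedes it below -/
import Mathlib

section
/- Let k, m be positive integers with gcd(k, m) = 1, let q = 2^k, and let α ∈ F_{2^m} be such that the polynomial φ_{q,α}(x) = x^{q+1} + x + α has no root in F_{2^m}. Let a, b, c, d ∈ F_{2^m} with a·d + b·c ≠ 0. Then the polynomial φ(x) = (c·x + d)^{q+1} + (c·x + d)·(a·x + b)^q + α·(a·x + b)^{q+1} has no root in F_{2^m}. -/
/-!
The substitution `x ↦ (c x + d) / (a x + b)` is a Möbius transformation, since its determinant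
`a d - b c = a d + b c` is nonzero. Hence `a x + b` and `c x + d` never vanish together, and `φ` is
the homogenization `v ^ (q + 1) + v u ^ q + α u ^ (q + 1)` of `φ_{q,α}` evaluated at
`(u, v) = (a x + b, c x + d)`. For `u ≠ 0` it equals `u ^ (q + 1) φ_{q,α}(v / u)`, and for `u = 0`
it equals `v ^ (q + 1)`; neither vanishes.
-/

theorem homogenization_ne_zero_of_forall_ne_zero {K : Type*} [Field K] {q : ℕ} (hq : q ≠ 0)
    {α : K} (hα : ∀ t : K, t ^ (q + 1) + t + α ≠ 0) {u v : K} (huv : u ≠ 0 ∨ v ≠ 0) :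
    v ^ (q + 1) + v * u ^ q + α * u ^ (q + 1) ≠ 0 := by
  by_cases hu : u = 0
  · have hv : v ≠ 0 := huv.resolve_left (not_not.mpr hu)
    simpa [hu, hq] using hv
  · have hfactor : v ^ (q + 1) + v * u ^ q + α * u ^ (q + 1)
        = u ^ (q + 1) * ((v / u) ^ (q + 1) + v / u + α) := by
      rw [div_pow]
      field_simp
      ring
    rw [hfactor]
    exact mul_ne_zero (pow_ne_zero _ hu) (hα (v / u))

theorem mul_add_ne_zero_or_of_det_ne_zero {R : Type*} [CommRing R] [NoZeroDivisors R]
    {a b c d : R} (hdet : a * d - b * c ≠ 0) (x : R) : a * x + b ≠ 0 ∨ c * x + d ≠ 0 := by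
  by_contra! h
  apply hdet
  calc a * d - b * c = a * (c * x + d) - c * (a * x + b) := by ring
    _ = 0 := by rw [h.1, h.2]; ring

theorem stmt_3_general (k : ℕ)
    (K : Type*) [Field K] [CharP K 2]
    (q : ℕ) (hq : q = 2 ^ k) (α : K)
    (hα : ∀ x : K, x ^ (q + 1) + x + α ≠ 0)
    (a b c d : K) (hdet : a * d + b * c ≠ 0) :
    ∀ x : K,
      (c * x + d) ^ (q + 1) + (c * x + d) * (a * x + b) ^ q
        + α * (a * x + b) ^ (q + 1) ≠ 0 := by
  intro x
  rw [← CharTwo.sub_eq_add] at hdet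
  exact homogenization_ne_zero_of_forall_ne_zero (hq ▸ pow_ne_zero k two_ne_zero) hα
    (mul_add_ne_zero_or_of_det_ne_zero hdet x)

/-- If φ_{q,α}(x) = x^{q+1} + x + α has no root in F_{2^m} and
a·d + b·c ≠ 0, then φ(x) = (c·x + d)^{q+1} + (c·x + d)·(a·x + b)^q + α·(a·x + b)^{q+1}
has no root in F_{2^m}. -/
theorem stmt_3 (k m : ℕ) (hk : 0 < k) (hm : 0 < m) (hgcd : Nat.gcd k m = 1)
    (K : Type*) [Field K] [Fintype K] [CharP K 2] (hcard : Fintype.card K = 2 ^ m)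
    (q : ℕ) (hq : q = 2 ^ k) (α : K)
    (hα : ∀ x : K, x ^ (q + 1) + x + α ≠ 0)
    (a b c d : K) (hdet : a * d + b * c ≠ 0) :
    ∀ x : K,
      (c * x + d) ^ (q + 1) + (c * x + d) * (a * x + b) ^ q
        + α * (a * x + b) ^ (q + 1) ≠ 0 :=
  stmt_3_general k K q hq α hα a b c d hdet
end

section
/- Let k, m be positive integers with gcd(k, m) = 1, let q = 2^k, and let α ∈ F_{2^m} be such that x^{q+1} + x + α has no root in F_{2^m}. Then the function F : F_{2^m} × F_{2^m} → F_{2^m} × F_{2^m} defined by F(x, y) = (x^{q+1} + x·y^q + α·y^{q+1}, x^{q²+1} + α·x^{q²}·y + (1+α)^q·x·y^{q²} + α·y^{q²+1}) is almost perfect nonlinear (APN). -/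
/-!
Write `σ x = x ^ q`, so that `F = (f, g)` with `f (x, y) = σ x * x + x * σ y + α * σ y * y`.
Both components are quadratic, so `F (x + a) + F x = b` has at most two solutions as soon as
the polar form `d ↦ polar F d a` vanishes only at `d = 0` and `d = a`. For such `d`, an identity
in characteristic two shows that `f d / f a` is fixed by `σ`, hence lies in `𝔽₂` because
`gcd (k, m) = 1`. The root condition on `α` says exactly that `f` has no nonzero zero
(dehomogenize at `y`), so `f d = 0` forces `d = 0`, while `f d = f a` forces
`f (d + a) = 0`, i.e. `d = a`.
-/

open QuadraticMap (polar)
open Function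

theorem eq_zero_or_one_of_pow_two_pow_eq_self {M₀ : Type*} [MonoidWithZero M₀]
    [IsLeftCancelMulZero M₀] {k m : ℕ} (hkm : Nat.gcd k m = 1) {t : M₀}
    (hk : t ^ 2 ^ k = t) (hm : t ^ 2 ^ m = t) : t = 0 ∨ t = 1 := by
  have hper : ∀ n, t ^ 2 ^ n = t → IsPeriodicPt (· ^ 2) n t := fun n h ↦ by
    rwa [IsPeriodicPt, IsFixedPt, pow_iterate]
  have h := (hper k hk).gcd (hper m hm)
  rw [hkm, IsPeriodicPt, IsFixedPt, iterate_one] at h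
  exact IsIdempotentElem.iff_eq_zero_or_one.mp ((sq t).symm.trans h)

theorem ncard_setOf_sub_eq_le_two {V W : Type*} [AddCommGroup V] [AddCommGroup W] {F : V → W}
    {a : V} (hpolar : ∀ x y, polar F (x - y) a = (F (x + a) - F x) - (F (y + a) - F y))
    (hker : ∀ d, polar F d a = 0 → d = 0 ∨ d = a) (b : W) :
    {x | F (x + a) - F x = b}.ncard ≤ 2 := by
  rcases Set.eq_empty_or_nonempty {x | F (x + a) - F x = b} with hempty | ⟨y, hy⟩
  · simp [hempty]
  have hsub : {x | F (x + a) - F x = b} ⊆ {y, y + a} := by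
    intro x hx
    rcases hker (x - y) (by rw [hpolar, hx, hy, sub_self]) with h | h
    · exact .inl (sub_eq_zero.mp h)
    · exact .inr (eq_add_of_sub_eq' h)
  calc _ ≤ ({y, y + a} : Set V).ncard := Set.ncard_le_ncard hsub
    _ ≤ ({y + a} : Set V).ncard + 1 := Set.ncard_insert_le _ _
    _ = 2 := by rw [Set.ncard_singleton]

namespace FamilyF1

section CommRing

variable {K : Type*} [CommRing K] (σ : K →+* K) (α : K)

def f (u : K × K) : K := σ u.1 * u.1 + u.1 * σ u.2 + α * (σ u.2 * u.2)

def g (u : K × K) : K :=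
  σ (σ u.1) * u.1 + α * σ (σ u.1) * u.2 + σ (1 + α) * u.1 * σ (σ u.2) + α * (σ (σ u.2) * u.2)

def F (u : K × K) : K × K := (f σ α u, g σ α u)

theorem polar_F (d a : K × K) : polar (F σ α) d a = (polar (f σ α) d a, polar (g σ α) d a) := rfl

theorem polar_F_sub (x y a : K × K) :
    polar (F σ α) (x - y) a = (F σ α (x + a) - F σ α x) - (F σ α (y + a) - F σ α y) := by
  ext <;> simp only [polar, F, f, g, Prod.fst_add, Prod.snd_add, Prod.fst_sub, Prod.snd_sub,
    map_add, map_sub] <;> ring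

variable {σ α} [CharP K 2]

theorem apply_f_mul_eq_mul_apply_f {d a : K × K} (h₁ : polar (f σ α) d a = 0)
    (h₂ : polar (g σ α) d a = 0) : σ (f σ α d) * f σ α a = f σ α d * σ (f σ α a) := by
  obtain ⟨d₁, d₂⟩ := d
  obtain ⟨a₁, a₂⟩ := a
  have hσ₁ : σ (polar (f σ α) (d₁, d₂) (a₁, a₂)) = 0 := by rw [h₁, map_zero]
  simp only [polar, f, g, Prod.mk_add_mk, map_add, map_sub, map_mul, map_one] at h₁ h₂ hσ₁ ⊢
  -- coefficients found by linear algebra over `𝔽₂`; the last term is zero in characteristic two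
  linear_combination (σ a₁ * σ (σ d₁) + σ a₁ * σ (σ d₂) + σ α * σ a₂ * σ (σ d₂)) * h₁
    - (σ a₁ * d₁ + σ a₂ * d₁ + α * σ a₂ * d₂) * hσ₁
    + (σ a₂ * σ d₁ - σ a₁ * σ d₂) * h₂
    + σ α * (a₁ * σ (σ d₂) + d₁ * σ (σ a₂)) * (σ a₁ * σ d₂ - σ a₂ * σ d₁)
      * CharTwo.two_eq_zero (R := K)

end CommRing

variable {K : Type*} [Field K] {σ : K →+* K} {α : K}

theorem f_eq_zero_iff (hα : ∀ t, σ t * t + t + α ≠ 0) {u : K × K} : f σ α u = 0 ↔ u = 0 := by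
  refine ⟨fun hu ↦ ?_, fun hu ↦ by simp [hu, f]⟩
  obtain ⟨x, y⟩ := u
  by_cases hy : y = 0
  · subst hy
    simpa [f] using hu
  · have hscale : f σ α (x, y) = σ y * y * (σ (x / y) * (x / y) + x / y + α) := by
      have : σ y ≠ 0 := by simpa using hy
      simp only [f, map_div₀]
      field_simp
    rw [hscale] at hu
    exact absurd hu (mul_ne_zero (mul_ne_zero (by simpa using hy) hy) (hα _))

variable [CharP K 2]

theorem eq_zero_or_eq_of_polar_F_eq_zero (hσ : ∀ t, σ t = t → t = 0 ∨ t = 1)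
    (hα : ∀ t, σ t * t + t + α ≠ 0) {d a : K × K} (ha : a ≠ 0)
    (h : polar (F σ α) d a = 0) : d = 0 ∨ d = a := by
  rw [polar_F, Prod.mk_eq_zero] at h
  have hfa : f σ α a ≠ 0 := (f_eq_zero_iff hα).not.mpr ha
  have hfix : σ (f σ α d / f σ α a) = f σ α d / f σ α a := by
    rw [map_div₀, div_eq_div_iff (by simpa using hfa) hfa]
    exact apply_f_mul_eq_mul_apply_f h.1 h.2
  rcases hσ _ hfix with h0 | h1
  · exact .inl ((f_eq_zero_iff hα).mp ((div_eq_zero_iff.mp h0).resolve_right hfa))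
  · have hfda : f σ α (d + a) = 0 := by
      have hpolar : f σ α (d + a) - f σ α d - f σ α a = 0 := h.1
      rw [div_eq_one_iff_eq hfa] at h1
      linear_combination hpolar + h1 + f σ α a * CharTwo.two_eq_zero (R := K)
    exact .inr (CharTwo.add_eq_zero.mp ((f_eq_zero_iff hα).mp hfda))

theorem ncard_setOf_F_add_add_eq_le_two (hσ : ∀ t, σ t = t → t = 0 ∨ t = 1)
    (hα : ∀ t, σ t * t + t + α ≠ 0) {a : K × K} (ha : a ≠ 0) (b : K × K) :
    {x | F σ α (x + a) + F σ α x = b}.ncard ≤ 2 := by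
  simp only [← CharTwo.sub_eq_add (F σ α _)]
  exact ncard_setOf_sub_eq_le_two (polar_F_sub σ α · · a)
    (fun _ ↦ eq_zero_or_eq_of_polar_F_eq_zero hσ hα ha) b

end FamilyF1

theorem stmt_4_general (k m : ℕ) (hgcd : Nat.gcd k m = 1)
    (K : Type*) [Field K] [Fintype K] [CharP K 2] (hcard : Fintype.card K = 2 ^ m)
    (q : ℕ) (hq : q = 2 ^ k) (α : K)
    (hα : ∀ x : K, x ^ (q + 1) + x + α ≠ 0)
    (F : K × K → K × K)
    (hF : ∀ x y : K, F (x, y) =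
      (x ^ (q + 1) + x * y ^ q + α * y ^ (q + 1),
       x ^ (q ^ 2 + 1) + α * x ^ (q ^ 2) * y + (1 + α) ^ q * x * y ^ (q ^ 2)
         + α * y ^ (q ^ 2 + 1))) :
    ∀ a : K × K, a ≠ 0 → ∀ b : K × K,
      {x : K × K | F (x + a) + F x = b}.ncard ≤ 2 := by
  set σ := iterateFrobenius K 2 k
  have hσ : ∀ t, σ t = t ^ q := fun t ↦ by rw [iterateFrobenius_def, hq]
  have hFσ : F = FamilyF1.F σ α := by
    funext ⟨x, y⟩
    simp only [hF, FamilyF1.F, FamilyF1.f, FamilyF1.g, hσ, ← pow_mul, ← sq]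
    ext <;> ring
  intro a ha b
  rw [hFσ]
  refine FamilyF1.ncard_setOf_F_add_add_eq_le_two (fun t ht ↦ ?_) (fun t ↦ ?_) ha b
  · exact eq_zero_or_one_of_pow_two_pow_eq_self hgcd (by rwa [← hq, ← hσ])
      (by rw [← hcard]; exact FiniteField.pow_card t)
  · rw [hσ, ← pow_succ]
    exact hα t

/-- Family F1: If gcd(k,m) = 1, q = 2^k and x^{q+1} + x + α has no root in
F_{2^m}, then F(x,y) = (x^{q+1} + x·y^q + α·y^{q+1},
x^{q²+1} + α·x^{q²}·y + (1+α)^q·x·y^{q²} + α·y^{q²+1}) is APN on F_{2^m} × F_{2^m}. -/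
theorem stmt_4 (k m : ℕ) (hk : 0 < k) (hm : 0 < m) (hgcd : Nat.gcd k m = 1)
    (K : Type*) [Field K] [Fintype K] [CharP K 2] (hcard : Fintype.card K = 2 ^ m)
    (q : ℕ) (hq : q = 2 ^ k) (α : K)
    (hα : ∀ x : K, x ^ (q + 1) + x + α ≠ 0)
    (F : K × K → K × K)
    (hF : ∀ x y : K, F (x, y) =
      (x ^ (q + 1) + x * y ^ q + α * y ^ (q + 1),
       x ^ (q ^ 2 + 1) + α * x ^ (q ^ 2) * y + (1 + α) ^ q * x * y ^ (q ^ 2)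
         + α * y ^ (q ^ 2 + 1))) :
    ∀ a : K × K, a ≠ 0 → ∀ b : K × K,
      {x : K × K | F (x + a) + F x = b}.ncard ≤ 2 :=
  stmt_4_general k m hgcd K hcard q hq α hα F hF
end

section
/- Let k, m be positive integers with gcd(k, m) = 1, let q = 2^k, and let α ∈ F_{2^m} be such that x^{q+1} + x + α has no root in F_{2^m}. Then the map y ↦ α^q·y^{q²} + y^q + α·y is a permutation of F_{2^m}. -/
/-!
If `L y = α^q y^{q²} + y^q + α y` vanished at some `y ≠ 0`, then `t = y^{q-1}` would satisfy
`α^q t^{q+1} + t + α = 0`; multiplying by `α` shows that `α t` is a root of `x^{q+1} + x + α²`,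
and since squaring is a bijective additive map in a finite field of characteristic 2, the square
root of `α t` is a root of `x^{q+1} + x + α`. For `q` a power of 2 the map `L` is additive, so a
trivial kernel makes it injective, hence bijective on a finite field.
-/

section Kernel

variable {R : Type*} [CommRing R]

lemma linearized_eq_mul_pow_pred (α y : R) {q : ℕ} (hq : 1 ≤ q) :
    α ^ q * y ^ q ^ 2 + y ^ q + α * y =
      (α ^ q * (y ^ (q - 1)) ^ (q + 1) + y ^ (q - 1) + α) * y := by
  obtain ⟨n, rfl⟩ : ∃ n, q = n + 1 := ⟨q - 1, by omega⟩
  simp only [Nat.add_sub_cancel]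
  ring

lemma mul_pow_succ_add_mul_add_sq (α t : R) (q : ℕ) :
    (α * t) ^ (q + 1) + α * t + α ^ 2 = α * (α ^ q * t ^ (q + 1) + t + α) := by
  ring

lemma exists_root_of_exists_root_sq [ExpChar R 2] [PerfectRing R 2] {β s : R} (q : ℕ)
    (hs : s ^ (q + 1) + s + β ^ 2 = 0) : ∃ w : R, w ^ (q + 1) + w + β = 0 := by
  obtain ⟨w, rfl⟩ := surjective_frobenius R 2 s
  refine ⟨w, injective_frobenius R 2 ?_⟩
  simpa only [map_add, map_pow, map_zero, frobenius_def] using hs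

lemma eq_zero_of_linearized_eq_zero [IsDomain R] [ExpChar R 2] [PerfectRing R 2]
    {α : R} {q : ℕ} (hq : 1 ≤ q) (hα : ∀ x : R, x ^ (q + 1) + x + α ≠ 0) {y : R}
    (hy : α ^ q * y ^ q ^ 2 + y ^ q + α * y = 0) : y = 0 := by
  by_contra hy0
  have ht : α ^ q * (y ^ (q - 1)) ^ (q + 1) + y ^ (q - 1) + α = 0 := by
    rw [linearized_eq_mul_pow_pred α y hq] at hy
    exact (mul_eq_zero.mp hy).resolve_right hy0
  have hs : (α * y ^ (q - 1)) ^ (q + 1) + α * y ^ (q - 1) + α ^ 2 = 0 := by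
    rw [mul_pow_succ_add_mul_add_sq, ht, mul_zero]
  obtain ⟨w, hw⟩ := exists_root_of_exists_root_sq q hs
  exact hα w hw

end Kernel

def linearizedTrinomial (R : Type*) [CommRing R] (p k : ℕ) [ExpChar R p] (α : R) : R →+ R :=
  (AddMonoidHom.mulLeft (α ^ p ^ k)).comp (iterateFrobenius R p (2 * k)).toAddMonoidHom +
    (iterateFrobenius R p k).toAddMonoidHom + AddMonoidHom.mulLeft α

lemma linearizedTrinomial_apply {R : Type*} [CommRing R] (p k : ℕ) [ExpChar R p] (α y : R) :
    linearizedTrinomial R p k α y = α ^ p ^ k * y ^ (p ^ k) ^ 2 + y ^ p ^ k + α * y := by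
  simp [linearizedTrinomial, iterateFrobenius_def, ← pow_mul, mul_comm k 2]

theorem stmt_5_general (k : ℕ)
    (K : Type*) [Field K] [Fintype K] [CharP K 2]
    (q : ℕ) (hq : q = 2 ^ k) (α : K)
    (hα : ∀ x : K, x ^ (q + 1) + x + α ≠ 0) :
    Function.Bijective (fun y : K => α ^ q * y ^ (q ^ 2) + y ^ q + α * y) := by
  subst hq
  have hL : ⇑(linearizedTrinomial K 2 k α) =
      fun y => α ^ 2 ^ k * y ^ (2 ^ k) ^ 2 + y ^ 2 ^ k + α * y :=
    funext (linearizedTrinomial_apply 2 k α)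
  rw [← hL]
  refine Finite.injective_iff_bijective.mp ((injective_iff_map_eq_zero _).mpr fun y hy => ?_)
  rw [hL] at hy
  exact eq_zero_of_linearized_eq_zero Nat.one_le_two_pow hα hy

/-- If gcd(k,m) = 1, q = 2^k and x^{q+1} + x + α has no root in F_{2^m},
then y ↦ α^q·y^{q²} + y^q + α·y is a permutation of F_{2^m}. -/
theorem stmt_5 (k m : ℕ) (hk : 0 < k) (hm : 0 < m) (hgcd : Nat.gcd k m = 1)
    (K : Type*) [Field K] [Fintype K] [CharP K 2] (hcard : Fintype.card K = 2 ^ m)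
    (q : ℕ) (hq : q = 2 ^ k) (α : K)
    (hα : ∀ x : K, x ^ (q + 1) + x + α ≠ 0) :
    Function.Bijective (fun y : K => α ^ q * y ^ (q ^ 2) + y ^ q + α * y) :=
  stmt_5_general k K q hq α hα
end

section
/- Let k, m be positive integers with gcd(k, m) = 1, let q = 2^k, and let α ∈ F_{2^m} be such that x^{q+1} + x + α has no root in F_{2^m}. For u ∈ F_{2^m}, set f_u = u^{q+1} + u + α and g_u = u^{q²+1} + α·u^{q²} + (1 + α^q)·u + α. Then for every u ∈ F_{2^m}, the polynomial f_u·y^{q+1} + g_u·y + α·f_u^q has no root y in F_{2^m}. -/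
/-!
In characteristic 2, with `q = 2^k`, put `N = u y + α` and `D = y + u^q + 1`. Then
`f_u y^{q+1} + g_u y + α f_u^q = N^{q+1} + N D^q + α D^{q+1}`, the homogenization of
`X^{q+1} + X + α` evaluated at `(N : D)`. Since that polynomial has no root, its homogenization
only vanishes at `N = D = 0`, and `N = D = 0` makes `u` itself a root of `X^{q+1} + X + α`.
-/

def homogenized {R : Type*} [CommRing R] (q : ℕ) (α N D : R) : R :=
  N ^ (q + 1) + N * D ^ q + α * D ^ (q + 1)

theorem homogenized_eq_zero {K : Type*} [Field K] {q : ℕ} (hq : q ≠ 0) {α : K}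
    (hα : ∀ x : K, x ^ (q + 1) + x + α ≠ 0) {N D : K} (h : homogenized q α N D = 0) :
    N = 0 ∧ D = 0 := by
  by_cases hD : D = 0
  · subst hD
    simpa [homogenized, zero_pow hq] using h
  · have hscale : D ^ (q + 1) * ((N / D) ^ (q + 1) + N / D + α) = homogenized q α N D := by
      rw [homogenized, div_pow]
      field_simp
      ring
    rw [h] at hscale
    exact absurd ((mul_eq_zero.mp hscale).resolve_left (pow_ne_zero _ hD)) (hα (N / D))

theorem homogenized_subst_eq {R : Type*} [CommRing R] [CharP R 2] (k : ℕ) (α u y : R) :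
    homogenized (2 ^ k) α (u * y + α) (y + u ^ 2 ^ k + 1) =
      (u ^ (2 ^ k + 1) + u + α) * y ^ (2 ^ k + 1)
        + (u ^ ((2 ^ k) ^ 2 + 1) + α * u ^ (2 ^ k) ^ 2 + (1 + α ^ 2 ^ k) * u + α) * y
        + α * (u ^ (2 ^ k + 1) + u + α) ^ 2 ^ k := by
  have h2 : (2 : R) = 0 := CharP.ofNat_eq_zero R 2
  have hfrob (a b : R) : (a + b) ^ 2 ^ k = a ^ 2 ^ k + b ^ 2 ^ k := add_pow_char_pow a b 2 k
  unfold homogenized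
  simp only [sq (2 ^ k), pow_succ, pow_mul, hfrob, mul_pow, one_pow]
  linear_combination (α * u ^ 2 ^ k * y ^ 2 ^ k + α * y ^ 2 ^ k
    + α * (u ^ 2 ^ k) ^ 2 ^ k + α) * h2

theorem stmt_6_general (k : ℕ)
    (K : Type*) [Field K] [CharP K 2]
    (q : ℕ) (hq : q = 2 ^ k) (α : K)
    (hα : ∀ x : K, x ^ (q + 1) + x + α ≠ 0)
    (f g : K → K)
    (hf : ∀ u : K, f u = u ^ (q + 1) + u + α)
    (hg : ∀ u : K, g u = u ^ (q ^ 2 + 1) + α * u ^ (q ^ 2) + (1 + α ^ q) * u + α) :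
    ∀ u y : K, f u * y ^ (q + 1) + g u * y + α * (f u) ^ q ≠ 0 := by
  intro u y hroot
  subst hq
  rw [hf, hg, ← homogenized_subst_eq] at hroot
  obtain ⟨hN, hD⟩ := homogenized_eq_zero (by positivity) hα hroot
  have hy : y = u ^ 2 ^ k + 1 := by
    linear_combination hD - (u ^ 2 ^ k + 1) * CharP.ofNat_eq_zero K 2
  refine hα u ?_
  rw [hy] at hN
  linear_combination hN

/-- With f_u = u^{q+1} + u + α and g_u = u^{q²+1} + α·u^{q²} + (1+α^q)·u + α,
if x^{q+1} + x + α has no root in F_{2^m}, then for every u the polynomial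
f_u·y^{q+1} + g_u·y + α·f_u^q has no root y in F_{2^m}. -/
theorem stmt_6 (k m : ℕ) (hk : 0 < k) (hm : 0 < m) (hgcd : Nat.gcd k m = 1)
    (K : Type*) [Field K] [Fintype K] [CharP K 2] (hcard : Fintype.card K = 2 ^ m)
    (q : ℕ) (hq : q = 2 ^ k) (α : K)
    (hα : ∀ x : K, x ^ (q + 1) + x + α ≠ 0)
    (f g : K → K)
    (hf : ∀ u : K, f u = u ^ (q + 1) + u + α)
    (hg : ∀ u : K, g u = u ^ (q ^ 2 + 1) + α * u ^ (q ^ 2) + (1 + α ^ q) * u + α) :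
    ∀ u y : K, f u * y ^ (q + 1) + g u * y + α * (f u) ^ q ≠ 0 :=
  stmt_6_general k K q hq α hα f g hf hg
end

section
/- Let k, m be positive integers with gcd(k, m) = 1, let q = 2^k, and let α ∈ F_{2^m} be such that x^{q+1} + x + α has no root in F_{2^m}. For u ∈ F_{2^m}, set f_u = u^{q+1} + u + α and g_u = u^{q²+1} + α·u^{q²} + (1 + α^q)·u + α. Then for every u ∈ F_{2^m}, the linearized map y ↦ α^q·f_u²·y^{q²} + g_u²·y^q + α·f_u^{2q}·y is a permutation of F_{2^m}. -/
/-!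
Write `σ` for the Frobenius power `x ↦ x ^ q` and `α = β ^ 2`. If `t ^ 2 * y = σ y`, then the
linearized map sends `y` to `y * E(t) ^ 2` with `E(t) = σ β * f * t * σ t + g * t + β * σ f`.
With `s = t * u + β` and `N = σ u * s + f * t`, an identity in characteristic two gives
`N * σ N + N * σ s + σ α * s * σ s = σ β * E(t)`. The left side is `s * σ s` times the image under
`σ` of `x * σ x + x + α` at the `x` with `σ x = N / s`, so it vanishes only for `N = s = 0`,
which forces `t = 0` and then `α = 0`. Hence the map has trivial kernel, and being additive on a
finite field it is bijective.
-/

open Function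

theorem bijective_of_map_add_of_eq_zero {A : Type*} [AddGroup A] [Finite A] (φ : A → A)
    (hadd : ∀ x y, φ (x + y) = φ x + φ y) (hker : ∀ y, φ y = 0 → y = 0) : Bijective φ :=
  Finite.injective_iff_bijective.mp <|
    (injective_iff_map_eq_zero (AddMonoidHom.mk' φ hadd)).mpr hker

section CommRing

variable {R : Type*} [CommRing R] [CharP R 2] (σ : R →+* R)

theorem linearized_eq_mul_sq (a b β y t : R) (ht : t ^ 2 * y = σ y) :
    σ β ^ 2 * a ^ 2 * σ (σ y) + b ^ 2 * σ y + β ^ 2 * σ a ^ 2 * y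
      = y * (σ β * a * t * σ t + b * t + β * σ a) ^ 2 := by
  have hσσ : σ (σ y) = σ t ^ 2 * (t ^ 2 * y) := by rw [← ht, map_mul, map_pow, ht]
  rw [hσσ, ← ht]
  grind

theorem homogeneous_eq_mul_twisted {u β f g : R} (hf : f = u * σ u + u + β ^ 2)
    (hg : g = u * σ (σ u) + β ^ 2 * σ (σ u) + (1 + σ β ^ 2) * u + β ^ 2) (t : R) :
    (σ u * (t * u + β) + f * t) * σ (σ u * (t * u + β) + f * t)
      + (σ u * (t * u + β) + f * t) * σ (t * u + β) + σ (β ^ 2) * (t * u + β) * σ (t * u + β)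
      = σ β * (σ β * f * t * σ t + g * t + β * σ f) := by
  subst hf hg
  simp only [map_add, map_mul, map_pow]
  grind

end CommRing

section Field

variable {K : Type*} [Field K] (σ : K →+* K)

theorem eq_zero_of_homogeneous_eq_zero (hσ : Surjective σ) {α : K}
    (hα : ∀ x, x * σ x + x + α ≠ 0) {N s : K} (h : N * σ N + N * σ s + σ α * s * σ s = 0) :
    N = 0 ∧ s = 0 := by
  by_cases hs : s = 0
  · subst hs
    simpa using h
  obtain ⟨x, hx⟩ := hσ (N / s)
  have hσs : σ s ≠ 0 := (map_ne_zero σ).mpr hs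
  have hroot : σ (x * σ x + x + α) * (s * σ s) = N * σ N + N * σ s + σ α * s * σ s := by
    simp only [map_add, map_mul, hx, map_div₀]
    field_simp
  rw [h] at hroot
  exact (mul_ne_zero ((map_ne_zero σ).mpr (hα x)) (mul_ne_zero hs hσs) hroot).elim

variable [CharP K 2]

theorem twisted_ne_zero (hσ : Surjective σ) {u β f g : K} (hα : ∀ x, x * σ x + x + β ^ 2 ≠ 0)
    (hf : f = u * σ u + u + β ^ 2)
    (hg : g = u * σ (σ u) + β ^ 2 * σ (σ u) + (1 + σ β ^ 2) * u + β ^ 2) (t : K) :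
    σ β * f * t * σ t + g * t + β * σ f ≠ 0 := by
  intro hE
  have hH := homogeneous_eq_mul_twisted σ hf hg t
  rw [hE, mul_zero] at hH
  obtain ⟨hN, hs⟩ := eq_zero_of_homogeneous_eq_zero σ hσ hα hH
  have hf0 : f ≠ 0 := hf ▸ hα u
  have ht : t = 0 := by simpa [hs, hf0] using hN
  have hβ : β = 0 := by simpa [ht] using hs
  exact hα 0 (by simp [hβ])

theorem bijective_linearized [Finite K] (hσ : Surjective σ) {u β f g : K}
    (hα : ∀ x, x * σ x + x + β ^ 2 ≠ 0) (hf : f = u * σ u + u + β ^ 2)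
    (hg : g = u * σ (σ u) + β ^ 2 * σ (σ u) + (1 + σ β ^ 2) * u + β ^ 2) :
    Bijective fun y => σ β ^ 2 * f ^ 2 * σ (σ y) + g ^ 2 * σ y + β ^ 2 * σ f ^ 2 * y := by
  refine bijective_of_map_add_of_eq_zero _ (fun y z => by simp only [map_add]; ring) ?_
  intro y hy
  by_contra hy0
  obtain ⟨t, ht⟩ := surjective_frobenius K 2 (σ y / y)
  rw [frobenius_def] at ht
  rw [linearized_eq_mul_sq σ f g β y t (by rw [ht]; field_simp), mul_eq_zero,
    pow_eq_zero_iff two_ne_zero] at hy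
  exact twisted_ne_zero σ hσ hα hf hg t (hy.resolve_left hy0)

end Field

theorem stmt_7_general (k : ℕ)
    (K : Type*) [Field K] [Fintype K] [CharP K 2]
    (q : ℕ) (hq : q = 2 ^ k) (α : K)
    (hα : ∀ x : K, x ^ (q + 1) + x + α ≠ 0)
    (f g : K → K)
    (hf : ∀ u : K, f u = u ^ (q + 1) + u + α)
    (hg : ∀ u : K, g u = u ^ (q ^ 2 + 1) + α * u ^ (q ^ 2) + (1 + α ^ q) * u + α) :
    ∀ u : K, Function.Bijective
      (fun y : K => α ^ q * (f u) ^ 2 * y ^ (q ^ 2) + (g u) ^ 2 * y ^ q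
        + α * (f u) ^ (2 * q) * y) := by
  intro u
  obtain ⟨β, rfl⟩ : ∃ β, α = β ^ 2 := (surjective_frobenius K 2 α).imp fun β h => h.symm
  set σ := iterateFrobenius K 2 k
  have hpow : ∀ x : K, x ^ q = σ x := fun x => by rw [hq, iterateFrobenius_def]
  have hpow2 : ∀ x : K, x ^ (q ^ 2) = σ (σ x) := fun x => by rw [sq, pow_mul, hpow, hpow]
  have hsucc : ∀ x : K, x ^ (q + 1) = x * σ x := fun x => by rw [pow_succ', hpow]
  simp only [hpow2, pow_mul', hpow, map_pow]
  refine bijective_linearized σ (bijective_iterateFrobenius K 2 k).2 (u := u) ?_ ?_ ?_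
  · simpa only [hsucc] using hα
  · rw [hf, hsucc]
  · rw [hg, hpow2, pow_succ', hpow2, hpow, map_pow]

/-- With f_u = u^{q+1} + u + α and g_u = u^{q²+1} + α·u^{q²} + (1+α^q)·u + α,
if x^{q+1} + x + α has no root in F_{2^m}, then for every u the linearized map
y ↦ α^q·f_u²·y^{q²} + g_u²·y^q + α·f_u^{2q}·y is a permutation of F_{2^m}. -/
theorem stmt_7 (k m : ℕ) (hk : 0 < k) (hm : 0 < m) (hgcd : Nat.gcd k m = 1)
    (K : Type*) [Field K] [Fintype K] [CharP K 2] (hcard : Fintype.card K = 2 ^ m)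
    (q : ℕ) (hq : q = 2 ^ k) (α : K)
    (hα : ∀ x : K, x ^ (q + 1) + x + α ≠ 0)
    (f g : K → K)
    (hf : ∀ u : K, f u = u ^ (q + 1) + u + α)
    (hg : ∀ u : K, g u = u ^ (q ^ 2 + 1) + α * u ^ (q ^ 2) + (1 + α ^ q) * u + α) :
    ∀ u : K, Function.Bijective
      (fun y : K => α ^ q * (f u) ^ 2 * y ^ (q ^ 2) + (g u) ^ 2 * y ^ q
        + α * (f u) ^ (2 * q) * y) :=
  stmt_7_general k K q hq α hα f g hf hg
end

section
/- Let m be a positive integer and let α ∈ F_{2^m} be such that the polynomial x³ + x + α has no root in F_{2^m}. Then α ≠ 0, the absolute trace satisfies Tr_m(1/α²) = Tr_m(1), and there exists β ∈ F_{2^m} such that β² + β + 1 = 1/α². -/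
/-!
Call `a` odd if `a ≠ 0` and `a⁻¹ + 1` is not of the form `β² + β`, i.e. `Tr(a⁻¹ + 1) = 1`.
The map `x ↦ x³ + x` sends odd elements to odd elements, by the partial fraction
`1/(x³ + x) = 1/x + δ + δ²` with `δ = 1/(x + 1)`, and it is injective on them: a collision
`x³ + x = y³ + y` with `x ≠ y` gives `(y/x)² + y/x = (1/x + 1)²`, and a square root of `y/x` then
exhibits `1/x + 1` as some `δ² + δ`. Being finite, the odd elements are permuted, so an `α` that is
not a value `x³ + x` is not odd: `1/α + 1 = β² + β`, hence `1/α² = (β²)² + β² + 1`. Finally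
`Tr(γ² + γ) = γ^(2^m) + γ = 0` for every `γ`, so `Tr(1/α²) = Tr(1)`.
-/

open Finset

namespace CharTwo

section CommRing

variable {R : Type*} [CommRing R] [CharP R 2]

theorem sum_range_sq_add_self_pow_two_pow {β : R} {m : ℕ} (hβ : β ^ 2 ^ m = β) :
    ∑ i ∈ range m, (β ^ 2 + β) ^ 2 ^ i = 0 := by
  have htel : ∑ i ∈ range m, (β ^ 2 ^ (i + 1) - β ^ 2 ^ i) = β ^ 2 ^ m - β ^ 2 ^ 0 :=
    sum_range_sub (fun i => β ^ 2 ^ i) m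
  simp only [sub_eq_add, pow_zero, pow_one, hβ, add_self_eq_zero] at htel
  rw [← htel]
  refine sum_congr rfl fun i _ => ?_
  rw [add_pow_char_pow, ← pow_mul, pow_succ']

end CommRing

variable {K : Type*} [Field K] [CharP K 2]

theorem cube_add_self (x : K) : x ^ 3 + x = x * (x + 1) ^ 2 := by
  rw [add_sq]; ring

theorem inv_cube_add_self {x : K} (hx : x ≠ 0) (hx1 : x + 1 ≠ 0) :
    (x ^ 3 + x)⁻¹ = x⁻¹ + (x + 1)⁻¹ + (x + 1)⁻¹ ^ 2 := by
  rw [cube_add_self]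
  field_simp
  linear_combination (-(2 * x) - x ^ 2) * two_eq_zero (R := K)

theorem exists_sq_add_self_of_sq [PerfectRing K 2] {c t : K} (h : t ^ 2 + t = c ^ 2) :
    ∃ δ, δ ^ 2 + δ = c := by
  obtain ⟨δ, hδ⟩ := (PerfectRing.bijective_frobenius (R := K) (p := 2)).surjective t
  refine ⟨δ, sq_injective ?_⟩
  change (δ ^ 2 + δ) ^ 2 = c ^ 2
  rw [← h, ← hδ, add_sq]

def IsCubicOdd (a : K) : Prop := a ≠ 0 ∧ ∀ β : K, β ^ 2 + β ≠ a⁻¹ + 1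

theorem IsCubicOdd.add_one_ne_zero {a : K} (ha : IsCubicOdd a) : a + 1 ≠ 0 := by
  rw [Ne, CharTwo.add_eq_zero]
  rintro rfl
  exact ha.2 0 (by simp [add_self_eq_zero])

theorem IsCubicOdd.cube_add_self {x : K} (hx : IsCubicOdd x) : IsCubicOdd (x ^ 3 + x) := by
  have hx1 := hx.add_one_ne_zero
  refine ⟨by rw [CharTwo.cube_add_self]; exact mul_ne_zero hx.1 (pow_ne_zero 2 hx1), fun β hβ => ?_⟩
  apply hx.2 (β + (x + 1)⁻¹)
  rw [inv_cube_add_self hx.1 hx1] at hβ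
  rw [add_sq]
  linear_combination hβ + ((x + 1)⁻¹ + (x + 1)⁻¹ ^ 2) * two_eq_zero (R := K)

theorem injOn_cube_add_self [PerfectRing K 2] :
    Set.InjOn (fun x : K => x ^ 3 + x) {a | IsCubicOdd a} := by
  intro x hx y _ hxy
  by_contra hne
  have hfactor : (x + y) * (x ^ 2 + x * y + y ^ 2 + 1) = 0 := by
    linear_combination hxy + (x * y ^ 2 + x ^ 2 * y + y + y ^ 3) * two_eq_zero (R := K)
  have hquad := (mul_eq_zero.mp hfactor).resolve_left (fun h => hne (CharTwo.add_eq_zero.mp h))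
  have hquot : (y / x) ^ 2 + y / x = (x⁻¹ + 1) ^ 2 := by
    field_simp [hx.1]
    linear_combination hquad + (-1 - x - x ^ 2) * two_eq_zero (R := K)
  obtain ⟨δ, hδ⟩ := exists_sq_add_self_of_sq hquot
  exact hx.2 δ hδ

theorem mapsTo_cube_add_self :
    Set.MapsTo (fun x : K => x ^ 3 + x) {a | IsCubicOdd a} {a | IsCubicOdd a} :=
  fun _ hx => IsCubicOdd.cube_add_self hx

theorem surjOn_cube_add_self [Finite K] :
    Set.SurjOn (fun x : K => x ^ 3 + x) {a | IsCubicOdd a} {a | IsCubicOdd a} :=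
  ((Set.toFinite _).injOn_iff_bijOn_of_mapsTo mapsTo_cube_add_self).mp
    injOn_cube_add_self |>.surjOn

theorem exists_sq_add_self_add_one_eq_one_div_sq [Finite K] {α : K}
    (hα : ∀ x : K, x ^ 3 + x + α ≠ 0) (hα0 : α ≠ 0) :
    ∃ β : K, β ^ 2 + β + 1 = 1 / α ^ 2 := by
  have hnotOdd : ¬IsCubicOdd α := fun hodd => by
    obtain ⟨x, -, hx⟩ := surjOn_cube_add_self hodd
    exact hα x (CharTwo.add_eq_zero.mpr hx)
  obtain ⟨β, hβ⟩ : ∃ β : K, β ^ 2 + β = α⁻¹ + 1 := by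
    simpa [IsCubicOdd, hα0] using hnotOdd
  refine ⟨β ^ 2, ?_⟩
  rw [← add_sq, hβ, add_sq, one_pow, add_assoc, add_self_eq_zero, add_zero, one_div, inv_pow]

end CharTwo

theorem stmt_9_general (m : ℕ)
    (K : Type*) [Field K] [Fintype K] [CharP K 2] (hcard : Fintype.card K = 2 ^ m)
    (α : K) (hα : ∀ x : K, x ^ 3 + x + α ≠ 0)
    (tr : K → K) (htr : ∀ x : K, tr x = ∑ i ∈ Finset.range m, x ^ 2 ^ i) :
    α ≠ 0 ∧ tr (1 / α ^ 2) = tr 1 ∧ ∃ β : K, β ^ 2 + β + 1 = 1 / α ^ 2 := by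
  have hα0 : α ≠ 0 := fun h => hα 0 (by simp [h])
  obtain ⟨β, hβ⟩ := CharTwo.exists_sq_add_self_add_one_eq_one_div_sq hα hα0
  have hfix : β ^ 2 ^ m = β := by rw [← hcard]; exact FiniteField.pow_card β
  refine ⟨hα0, ?_, β, hβ⟩
  simp_rw [htr, ← hβ, add_pow_char_pow (x := β ^ 2 + β) (y := 1), sum_add_distrib,
    CharTwo.sum_range_sq_add_self_pow_two_pow hfix, zero_add]

/-- If x³ + x + α has no root in F_{2^m}, then α ≠ 0,
Tr_m(1/α²) = Tr_m(1), and there exists β with β² + β + 1 = 1/α². -/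
theorem stmt_9 (m : ℕ) (hm : 0 < m)
    (K : Type*) [Field K] [Fintype K] [CharP K 2] (hcard : Fintype.card K = 2 ^ m)
    (α : K) (hα : ∀ x : K, x ^ 3 + x + α ≠ 0)
    (tr : K → K) (htr : ∀ x : K, tr x = ∑ i ∈ Finset.range m, x ^ 2 ^ i) :
    α ≠ 0 ∧ tr (1 / α ^ 2) = tr 1 ∧ ∃ β : K, β ^ 2 + β + 1 = 1 / α ^ 2 :=
  stmt_9_general m K hcard α hα tr htr
end

section
/- Let m be a positive integer and let α ∈ F_{2^m} be such that the polynomial x³ + x + α has no root in F_{2^m}. Then the equation a³ + α·b·a² + (α²·b² + b² + 1)·a + α³·b³ + α·b² + α = 0 has exactly one solution (a, b) in F_{2^m} × F_{2^m}, namely (a, b) = (α, 1). -/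
/-!
Over a field of characteristic 2 the equation is the binary cubic form `c³ + d²c + α d³`
evaluated at `c = a + α b`, `d = b + 1`. If `d ≠ 0`, then `c / d` would be a root of
`x³ + x + α`; so `d = 0`, whence `c³ = 0`, and `(a, b) = (α, 1)`.
-/

/-- The homogenization of `x³ + x + α`. -/
def cubicForm {R : Type*} [CommRing R] (α c d : R) : R := c ^ 3 + d ^ 2 * c + α * d ^ 3

theorem cubicForm_eq_zero_iff {K : Type*} [Field K] {α : K} (hα : ∀ x : K, x ^ 3 + x + α ≠ 0)
    {c d : K} : cubicForm α c d = 0 ↔ c = 0 ∧ d = 0 := by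
  refine ⟨fun h => ?_, fun ⟨hc, hd⟩ => by simp [cubicForm, hc, hd]⟩
  have hd : d = 0 := by
    by_contra hd
    apply hα (c / d)
    have : (c / d) ^ 3 + c / d + α = cubicForm α c d / d ^ 3 := by
      unfold cubicForm
      field_simp
    rw [this, h, zero_div]
  subst hd
  exact ⟨pow_eq_zero_iff three_ne_zero |>.mp (by simpa [cubicForm] using h), rfl⟩

theorem CharTwo.cubicForm_add_mul_add_one {R : Type*} [CommRing R] [CharP R 2] (α a b : R) :
    cubicForm α (a + α * b) (b + 1) = a ^ 3 + α * b * a ^ 2 + (α ^ 2 * b ^ 2 + b ^ 2 + 1) * a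
        + α ^ 3 * b ^ 3 + α * b ^ 2 + α := by
  unfold cubicForm
  linear_combination (2 * α * b + 2 * α * b ^ 2 + α * b ^ 3 + a * b + a * b ^ 2 * α ^ 2
    + a ^ 2 * b * α) * CharTwo.two_eq_zero (R := R)

theorem stmt_10_general
    (K : Type*) [Field K] [CharP K 2]
    (α : K) (hα : ∀ x : K, x ^ 3 + x + α ≠ 0) :
    {p : K × K | p.1 ^ 3 + α * p.2 * p.1 ^ 2 + (α ^ 2 * p.2 ^ 2 + p.2 ^ 2 + 1) * p.1
        + α ^ 3 * p.2 ^ 3 + α * p.2 ^ 2 + α = 0} = {(α, 1)} := by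
  ext ⟨a, b⟩
  simp only [Set.mem_ofPred_eq, Set.mem_singleton_iff, Prod.mk.injEq,
    ← CharTwo.cubicForm_add_mul_add_one, cubicForm_eq_zero_iff hα, CharTwo.add_eq_zero]
  exact and_congr_left fun hb => by rw [hb, mul_one]

/-- If x³ + x + α has no root in F_{2^m}, then the equation
a³ + α·b·a² + (α²·b² + b² + 1)·a + α³·b³ + α·b² + α = 0 has exactly one solution
(a, b) in F_{2^m} × F_{2^m}, namely (a, b) = (α, 1). -/
theorem stmt_10 (m : ℕ) (hm : 0 < m)
    (K : Type*) [Field K] [Fintype K] [CharP K 2] (hcard : Fintype.card K = 2 ^ m)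
    (α : K) (hα : ∀ x : K, x ^ 3 + x + α ≠ 0) :
    {p : K × K | p.1 ^ 3 + α * p.2 * p.1 ^ 2 + (α ^ 2 * p.2 ^ 2 + p.2 ^ 2 + 1) * p.1
        + α ^ 3 * p.2 ^ 3 + α * p.2 ^ 2 + α = 0} = {(α, 1)} :=
  stmt_10_general K α hα
end

section
/- Let k, m be positive integers with gcd(k, m) = 1. Then the polynomial x^{2^k + 1} + x + 1 has no root in the finite field F_{2^m} if and only if gcd(3, m) = 1. -/
/-!
Let `q = 2 ^ k` and `φ x = x ^ q`. A root satisfies `φ x = 1 + 1 / x`, and in characteristic 2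
the Möbius map `y ↦ 1 + 1 / y` has order 3, so `x ^ (2 ^ (3 k)) = x`. Together with
`x ^ (2 ^ m) = x` this gives `x ^ 2 = x` once `gcd (3 k, m) = 1`, which no root satisfies.
Conversely, if `3 ∣ m` then `𝔽₈ ⊆ 𝔽_{2^m}`; a root `a` of `X ^ 3 + X + 1` in `𝔽₈` has
`a ^ q = a ^ 2` or `a ^ q = a ^ 4` according to `k mod 3`, and then `a` or `a + 1` is a root.
-/

open Function

section CharTwo

variable {R : Type*} [CommRing R] [CharP R 2]

theorem isPeriodicPt_frobenius_two_iff {n : ℕ} {x : R} :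
    IsPeriodicPt (frobenius R 2) n x ↔ x ^ 2 ^ n = x := by
  rw [IsPeriodicPt, IsFixedPt, iterate_frobenius]

theorem apply_apply_apply_eq_self_of_apply_mul_eq_add_one (φ : R →+* R) {x : R}
    (hx : φ x * x = x + 1) : φ (φ (φ x)) = x := by
  have hy := congrArg φ hx
  have hz := congrArg φ hy
  simp only [map_mul, map_add, map_one] at hy hz
  have h2 : (2 : R) = 0 := CharTwo.two_eq_zero
  have hzx : φ (φ x) * (x + 1) = 1 := by
    linear_combination (-x) * hy + (-φ (φ x) - 1) * hx + (x * φ x * φ (φ x) - x - 1) * h2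
  linear_combination (x + 1) * hz + (1 - φ (φ (φ x))) * hzx + h2

theorem isPeriodicPt_frobenius_of_pow_add_add_one_eq_zero {k : ℕ} {x : R}
    (hx : x ^ (2 ^ k + 1) + x + 1 = 0) : IsPeriodicPt (frobenius R 2) (k * 3) x := by
  have hφ : iterateFrobenius R 2 k x * x = x + 1 := by
    rw [iterateFrobenius_def, ← pow_succ]
    exact CharTwo.add_eq_zero.mp (by rwa [← add_assoc])
  rw [IsPeriodicPt, IsFixedPt, iterate_mul, ← coe_iterateFrobenius]
  exact apply_apply_apply_eq_self_of_apply_mul_eq_add_one _ hφ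

theorem pow_succ_add_add_one_ne_zero_of_sq_eq_self [Nontrivial R] {x : R} (hx : x ^ 2 = x)
    (n : ℕ) : x ^ (n + 1) + x + 1 ≠ 0 := by
  rw [IsIdempotentElem.pow_succ_eq n (by rwa [IsIdempotentElem, ← sq]),
    CharTwo.add_self_eq_zero, zero_add]
  exact one_ne_zero

theorem exists_pow_add_add_one_eq_zero_of_cube_eq_add_one {a : R} (ha : a ^ 3 = a + 1) {k : ℕ}
    (hk : ¬ 3 ∣ k) : ∃ x : R, x ^ (2 ^ k + 1) + x + 1 = 0 := by
  have h2 : (2 : R) = 0 := CharTwo.two_eq_zero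
  have hper : IsPeriodicPt (frobenius R 2) 3 a := isPeriodicPt_frobenius_two_iff.mpr <| by
    linear_combination (a ^ 5 + a ^ 3 + a ^ 2 + a + 2) * ha + (a ^ 2 + a + 1) * h2
  have hper' : IsPeriodicPt (frobenius R 2) 3 (a + 1) := isPeriodicPt_frobenius_two_iff.mpr <| by
    rw [add_pow_char_pow, one_pow, isPeriodicPt_frobenius_two_iff.mp hper]
  have hmod : k % 3 = 1 ∨ k % 3 = 2 := by omega
  rcases hmod with hk | hk
  · refine ⟨a, ?_⟩
    have hq := hper.iterate_mod_apply k
    rw [hk, iterate_frobenius, iterate_frobenius] at hq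
    rw [pow_succ, ← hq]
    linear_combination ha + (a + 1) * h2
  · refine ⟨a + 1, ?_⟩
    have hq := hper'.iterate_mod_apply k
    rw [hk, iterate_frobenius, iterate_frobenius] at hq
    rw [pow_succ, ← hq]
    linear_combination (a ^ 2 + 5 * a + 11) * ha + (8 * a ^ 2 + 11 * a + 7) * h2

end CharTwo

/-- An element of order 7 is a root of `(X - 1) (X ^ 3 + X + 1) (X ^ 3 + X ^ 2 + 1)`; in the
second case its inverse `z ^ 6` is a root of `X ^ 3 + X + 1`. -/
theorem exists_cube_eq_add_one {K : Type*} [Field K] [Finite K] [CharP K 2]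
    (h7 : 7 ∣ Nat.card K - 1) : ∃ a : K, a ^ 3 = a + 1 := by
  have h2 : (2 : K) = 0 := CharTwo.two_eq_zero
  have : Fact (Nat.Prime 7) := ⟨by norm_num⟩
  obtain ⟨ζ, hζ⟩ := exists_prime_orderOf_dvd_card' (G := Kˣ) 7 (by rwa [Nat.card_units])
  set z : K := ↑ζ
  have hz7 : z ^ 7 = 1 := by
    rw [← Units.val_pow_eq_pow_val, ← hζ, pow_orderOf_eq_one, Units.val_one]
  have hz1 : z - 1 ≠ 0 := by
    rw [sub_ne_zero, ne_eq, Units.val_eq_one, ← orderOf_eq_one_iff, hζ]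
    norm_num
  have hfactor : (z - 1) * ((z ^ 3 + z + 1) * (z ^ 3 + z ^ 2 + 1)) = 0 := by
    linear_combination hz7 + (z ^ 4 - z ^ 3) * h2
  rcases mul_eq_zero.mp ((mul_eq_zero.mp hfactor).resolve_left hz1) with hc | hc
  · exact ⟨z, by linear_combination hc - (z + 1) * h2⟩
  · exact ⟨z ^ 6, by
      linear_combination (z ^ 11 + z ^ 4) * hz7 + (-z ^ 3 + z ^ 2 + 1) * hc + (-z ^ 2 - 1) * h2⟩

theorem stmt_12_general (k m : ℕ) (hgcd : Nat.gcd k m = 1)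
    (K : Type*) [Field K] [Fintype K] [CharP K 2] (hcard : Fintype.card K = 2 ^ m) :
    (∀ x : K, x ^ (2 ^ k + 1) + x + 1 ≠ 0) ↔ Nat.gcd 3 m = 1 := by
  rw [← Nat.Coprime, Nat.Prime.coprime_iff_not_dvd Nat.prime_three]
  constructor
  · intro hno h3m
    have h3k : ¬ 3 ∣ k := fun h3k => absurd (hgcd ▸ Nat.dvd_gcd h3k h3m) (by norm_num)
    obtain ⟨a, ha⟩ := exists_cube_eq_add_one (K := K) <| by
      rw [Nat.card_eq_fintype_card, hcard]
      exact Nat.pow_sub_one_dvd_pow_sub_one 2 h3m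
    obtain ⟨x, hx⟩ := exists_pow_add_add_one_eq_zero_of_cube_eq_add_one ha h3k
    exact hno x hx
  · intro h3m x hx
    have hm : IsPeriodicPt (frobenius K 2) m x :=
      isPeriodicPt_frobenius_two_iff.mpr (hcard ▸ FiniteField.pow_card x)
    have hcop : Nat.Coprime (k * 3) m :=
      Nat.Coprime.mul_left hgcd ((Nat.Prime.coprime_iff_not_dvd Nat.prime_three).mpr h3m)
    have h1 := (isPeriodicPt_frobenius_of_pow_add_add_one_eq_zero hx).gcd hm
    rw [hcop.gcd_eq_one, isPeriodicPt_frobenius_two_iff, pow_one] at h1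
    exact pow_succ_add_add_one_ne_zero_of_sq_eq_self h1 _ hx

/-- Let gcd(k, m) = 1. Then x^{2^k + 1} + x + 1 has no root in F_{2^m}
iff gcd(3, m) = 1. -/
theorem stmt_12 (k m : ℕ) (hk : 0 < k) (hm : 0 < m) (hgcd : Nat.gcd k m = 1)
    (K : Type*) [Field K] [Fintype K] [CharP K 2] (hcard : Fintype.card K = 2 ^ m) :
    (∀ x : K, x ^ (2 ^ k + 1) + x + 1 ≠ 0) ↔ Nat.gcd 3 m = 1 :=
  stmt_12_general k m hgcd K hcard
end

section
/- Let n be an even positive integer and let F : F_{2^n} → F_{2^n} be a quadratic APN function with F(0) = 0, meaning that for every a ∈ F_{2^n} the map x ↦ F(x + a) + F(x) + F(a) is additive. Suppose that for every nonzero b in the image of F, the preimage F^{−1}(b) has at least 3 elements. Then F is 3-to-1: F^{−1}(0) = {0} and for every b in the image of F with b ≠ 0, the preimage F^{−1}(b) has exactly 3 elements. -/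
/-!
Count the ordered pairs `(x, y)` with `F x = F y`. Writing `y = x + a`, those with `x ≠ y` number
`∑_{a ≠ 0} #{x | F (x + a) = F x} ≤ 2 (q - 1)` by the APN property, so
`∑_x #F⁻¹(F x) ≤ 3q - 2`. If `N = #F⁻¹(0)` and every other fibre has at least three points, the
same sum is at least `N² + 3 (q - N)`; hence `(N - 1)(N - 2) ≤ 0` with no slack left, forcing
`N ∈ {1, 2}` and all nonzero fibres of size exactly three. Then `3 ∣ q - N`, while
`q = 2ⁿ ≡ 1 (mod 3)` for even `n`, so `N = 1`.
-/

open Finset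

theorem Set.ncard_preimage_singleton_eq_card_filter {α β : Type*} [Fintype α] [DecidableEq β]
    (f : α → β) (b : β) : (f ⁻¹' {b}).ncard = #{x | f x = b} := by
  rw [← Set.ncard_coe_finset, coe_filter]
  simp [Set.preimage]

theorem sum_card_fiber_eq_card_add_sum_card_shift {G β : Type*} [AddGroup G] [Fintype G]
    [DecidableEq G] [DecidableEq β] (f : G → β) :
    ∑ x, #{y | f y = f x} = Fintype.card G + ∑ a ∈ univ.erase 0, #{x | f (x + a) = f x} := by
  have hshift : ∀ x, #{y | f y = f x} = #{a | f (x + a) = f x} := fun x =>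
    card_bij (fun y _ => -x + y) (by simp) (by simp)
      fun a ha => ⟨x + a, by simpa using ha, by simp⟩
  simp only [hshift, card_filter]
  rw [sum_comm, ← add_sum_erase _ _ (mem_univ 0)]
  simp

theorem sum_card_fiber_add_two_le_of_card_shift_le_two {G β : Type*} [AddGroup G] [Fintype G]
    [DecidableEq G] [DecidableEq β] (f : G → β) (h : ∀ a ≠ 0, #{x | f (x + a) = f x} ≤ 2) :
    ∑ x, #{y | f y = f x} + 2 ≤ 3 * Fintype.card G := by
  have hle := sum_le_sum (s := univ.erase 0) fun a ha => h a (ne_of_mem_erase ha)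
  rw [sum_const, card_erase_of_mem (mem_univ 0), card_univ, smul_eq_mul] at hle
  have hpos := Fintype.card_pos (α := G)
  rw [sum_card_fiber_eq_card_add_sum_card_shift f]
  omega

theorem Nat.eq_one_or_eq_two_and_eq_zero_of_mul_self_add_le {N E : ℕ}
    (h : N * N + E + 2 ≤ 3 * N) : (N = 1 ∨ N = 2) ∧ E = 0 := by
  have hN : N ≤ 2 := by nlinarith
  interval_cases N <;> omega

theorem card_fiber_eq_three_of_sum_card_fiber_add_two_le {α β : Type*} [Fintype α]
    [DecidableEq β] (f : α → β) (z : β) (h3 : ∀ x, f x ≠ z → 3 ≤ #{y | f y = f x})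
    (hsum : ∑ x, #{y | f y = f x} + 2 ≤ 3 * Fintype.card α) :
    (#{x | f x = z} = 1 ∨ #{x | f x = z} = 2) ∧ ∀ x, f x ≠ z → #{y | f y = f x} = 3 := by
  set N := #{x | f x = z}
  set E := ∑ x with f x ≠ z, (#{y | f y = f x} - 3)
  have hzero : ∑ x with f x = z, #{y | f y = f x} = N * N := by
    rw [sum_congr rfl fun x hx => by rw [(mem_filter.1 hx).2], sum_const, smul_eq_mul]
  have hrest : ∑ x with f x ≠ z, #{y | f y = f x} = 3 * #{x | f x ≠ z} + E := by
    rw [← sum_congr rfl fun x hx => Nat.add_sub_of_le (h3 x (mem_filter.1 hx).2), sum_add_distrib,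
      sum_const, smul_eq_mul, mul_comm]
  have hcard : N + #{x | f x ≠ z} = Fintype.card α := card_filter_add_card_filter_not _
  rw [← sum_filter_add_sum_filter_not univ (fun x => f x = z), hzero, hrest] at hsum
  obtain ⟨hN, hE⟩ :=
    Nat.eq_one_or_eq_two_and_eq_zero_of_mul_self_add_le (N := N) (E := E) (by linarith)
  refine ⟨hN, fun x hx => ?_⟩
  have hexcess := (sum_eq_zero_iff.1 hE) x (by simpa using hx)
  have hge := h3 x hx
  omega

theorem dvd_card_of_forall_card_fiber_eq {α β : Type*} [DecidableEq β] {s : Finset α}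
    (f : α → β) {k : ℕ} (h : ∀ x ∈ s, #{y ∈ s | f y = f x} = k) : k ∣ #s := by
  rw [card_eq_sum_card_image f s]
  refine dvd_sum fun b hb => ?_
  obtain ⟨x, hx, rfl⟩ := mem_image.1 hb
  rw [h x hx]

theorem Nat.two_pow_mod_three_of_even {n : ℕ} (hn : Even n) : 2 ^ n % 3 = 1 := by
  obtain ⟨m, rfl⟩ := hn
  rw [← two_mul, pow_mul, Nat.pow_mod]
  norm_num

theorem stmt_17_general (n : ℕ) (hne : Even n)
    (K : Type*) [Field K] [Fintype K] [CharP K 2] (hcard : Fintype.card K = 2 ^ n)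
    (F : K → K) (hF0 : F 0 = 0)
    (hapn : ∀ a : K, a ≠ 0 → ∀ b : K, {x : K | F (x + a) + F x = b}.ncard ≤ 2)
    (h3 : ∀ b : K, b ∈ Set.range F → b ≠ 0 → 3 ≤ (F ⁻¹' {b}).ncard) :
    F ⁻¹' {0} = {0} ∧
    ∀ b : K, b ∈ Set.range F → b ≠ 0 → (F ⁻¹' {b}).ncard = 3 := by
  classical
  have hsum := sum_card_fiber_add_two_le_of_card_shift_le_two F fun a ha => by
    simpa [← Set.ncard_coe_finset, CharTwo.add_eq_zero] using hapn a ha 0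
  have hfib : ∀ x, F x ≠ 0 → 3 ≤ #{y | F y = F x} := fun x hx => by
    simpa [Set.ncard_preimage_singleton_eq_card_filter] using h3 (F x) ⟨x, rfl⟩ hx
  obtain ⟨hN, hfib3⟩ := card_fiber_eq_three_of_sum_card_fiber_add_two_le F 0 hfib hsum
  have hdvd : 3 ∣ #{x | F x ≠ 0} := dvd_card_of_forall_card_fiber_eq F fun x hx => by
    have hx0 := (mem_filter.1 hx).2
    rw [← hfib3 x hx0, filter_filter]
    exact congrArg card (filter_congr fun y _ => ⟨And.right, fun hy => ⟨hy ▸ hx0, hy⟩⟩)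
  have hsplit : #{x | F x = 0} + #{x | F x ≠ 0} = Fintype.card K :=
    card_filter_add_card_filter_not _
  have hmod := Nat.two_pow_mod_three_of_even hne
  have hN1 : #{x | F x = 0} = 1 := by rw [hcard] at hsplit; omega
  refine ⟨?_, ?_⟩
  · rw [← Set.ncard_preimage_singleton_eq_card_filter F 0] at hN1
    obtain ⟨x, hx⟩ := Set.ncard_eq_one.1 hN1
    have h0 : (0 : K) ∈ F ⁻¹' {0} := hF0
    rw [hx, Set.mem_singleton_iff] at h0
    rw [hx, h0]
  · rintro b ⟨x, rfl⟩ hx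
    rw [Set.ncard_preimage_singleton_eq_card_filter]
    exact hfib3 x hx

/-- Let n be even, F : F_{2^n} → F_{2^n} a quadratic APN function with
F(0) = 0 (quadratic: for each a, x ↦ F(x+a)+F(x)+F(a) is additive). If every nonzero b
in the image of F has at least 3 preimages, then F is 3-to-1: F⁻¹(0) = {0} and every
nonzero b in the image of F has exactly 3 preimages. -/
theorem stmt_17 (n : ℕ) (hn : 0 < n) (hne : Even n)
    (K : Type*) [Field K] [Fintype K] [CharP K 2] (hcard : Fintype.card K = 2 ^ n)
    (F : K → K) (hF0 : F 0 = 0)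
    (hquad : ∀ a x y : K,
      F (x + y + a) + F (x + y) + F a
        = (F (x + a) + F x + F a) + (F (y + a) + F y + F a))
    (hapn : ∀ a : K, a ≠ 0 → ∀ b : K, {x : K | F (x + a) + F x = b}.ncard ≤ 2)
    (h3 : ∀ b : K, b ∈ Set.range F → b ≠ 0 → 3 ≤ (F ⁻¹' {b}).ncard) :
    F ⁻¹' {0} = {0} ∧
    ∀ b : K, b ∈ Set.range F → b ≠ 0 → (F ⁻¹' {b}).ncard = 3 :=
  stmt_17_general n hne K hcard F hF0 hapn h3
end
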